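/- On ℂ³ with standard basis vectors e₀, e₁, e₂, let Q₀ be the orthogonal projection matrix onto the span of e₀, Q₊ the orthogonal projection onto the span of (e₀ + e₁)/√2, and Q₊' the orthogonal projection onto the span of (e₀ + e₂)/√2. Define (L, R) on matrices by: (L P, R P) = (0, 0) if P ∈ {0, Q₀, Q₊, Q₊'}; (L P, R P) = (1, 1) if P ∈ {1, 1 − Q₀, 1 − Q₊, 1 − Q₊'}; and (L P, R P) = (0, 1) otherwise. Then (L, R) is a QIVPM on ℂ³. -/

import Mathlib

open Matrix
open scoped ComplexOrder

/-- A projector on `ℂ^d`: an idempotent, self-adjoint matrix. -/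
def IsProjector {d : ℕ} (P : Matrix (Fin d) (Fin d) ℂ) : Prop :=
  P * P = P ∧ Pᴴ = P

/-- A quantum interval-valued probability measure (QIVPM) on `ℂ^d`,
given by the pair of interval-endpoint functions `L ≤ R`. -/
def IsQIVPM {d : ℕ} (L R : Matrix (Fin d) (Fin d) ℂ → ℝ) : Prop :=
  (∀ P, IsProjector P → 0 ≤ L P ∧ L P ≤ R P ∧ R P ≤ 1) ∧
  (L 0 = 0 ∧ R 0 = 0) ∧
  (L 1 = 1 ∧ R 1 = 1) ∧
  (∀ P, IsProjector P → L (1 - P) = 1 - R P ∧ R (1 - P) = 1 - L P) ∧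
  (∀ P₀ P₁, IsProjector P₀ → IsProjector P₁ → P₀ * P₁ = P₁ * P₀ →
    L P₀ + L P₁ ≤ L (P₀ + P₁ - P₀ * P₁) + L (P₀ * P₁) ∧
    R (P₀ + P₁ - P₀ * P₁) + R (P₀ * P₁) ≤ R P₀ + R P₁)

/-- A QIVPM is `δ`-deterministic if every projector's interval lies in `[0,δ]` or `[1-δ,1]`. -/
def IsDeltaDet {d : ℕ} (δ : ℝ) (L R : Matrix (Fin d) (Fin d) ℂ → ℝ) : Prop :=
  ∀ P, IsProjector P → R P ≤ δ ∨ 1 - δ ≤ L P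

/-- A QIVPM is `0`-deterministic if every projector is assigned `[0,0]` or `[1,1]`. -/
def IsZeroDet {d : ℕ} (L R : Matrix (Fin d) (Fin d) ℂ → ℝ) : Prop :=
  ∀ P, IsProjector P → (L P = 0 ∧ R P = 0) ∨ (L P = 1 ∧ R P = 1)

/-- A state (density matrix) on `ℂ^d`. -/
def IsState {d : ℕ} (ρ : Matrix (Fin d) (Fin d) ℂ) : Prop :=
  ρ.PosSemidef ∧ ρ.trace = 1

/-- Orthogonal projection onto the span of `e₀`. -/
noncomputable def Q0 : Matrix (Fin 3) (Fin 3) ℂ := !![1, 0, 0; 0, 0, 0; 0, 0, 0]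

/-- Orthogonal projection onto the span of `(e₀ + e₁)/√2`. -/
noncomputable def Qplus : Matrix (Fin 3) (Fin 3) ℂ := !![1/2, 1/2, 0; 1/2, 1/2, 0; 0, 0, 0]

/-- Orthogonal projection onto the span of `(e₀ + e₂)/√2`. -/
noncomputable def Qplus' : Matrix (Fin 3) (Fin 3) ℂ := !![1/2, 0, 1/2; 0, 0, 0; 1/2, 0, 1/2]

open Classical in
/-- Left endpoint: `0` on `{0, Q0, Q₊, Q₊'}`, `1` on their complements and `1`, else `0`. -/
noncomputable def L8 : Matrix (Fin 3) (Fin 3) ℂ → ℝ := fun P =>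
  if P = 0 ∨ P = Q0 ∨ P = Qplus ∨ P = Qplus' then 0
  else if P = 1 ∨ P = 1 - Q0 ∨ P = 1 - Qplus ∨ P = 1 - Qplus' then 1
  else 0

open Classical in
/-- Right endpoint: `0` on `{0, Q0, Q₊, Q₊'}`, `1` on their complements and `1`, else `1`. -/
noncomputable def R8 : Matrix (Fin 3) (Fin 3) ℂ → ℝ := fun P =>
  if P = 0 ∨ P = Q0 ∨ P = Qplus ∨ P = Qplus' then 0
  else if P = 1 ∨ P = 1 - Q0 ∨ P = 1 - Qplus ∨ P = 1 - Qplus' then 1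
  else 1

/-!
Let `N = {0, Q₀, Q₊, Q₊'}` and `C = {P | 1 - P ∈ N}`. Then `L8` is the indicator function of `C`
and `R8 P = 1 - L8 (1 - P)`. Since `P ↦ 1 - P` exchanges `P₀ + P₁ - P₀ P₁` and `P₀ P₁` for
commuting projectors, the axioms for `R8` follow from those for `L8`, which reduce to properties
of `C`: it is disjoint from `N` (compare traces), and for commuting projectors, `P₀ ∈ C` forces
`P₀ + P₁ - P₀ P₁ ∈ C`, while `P₀, P₁ ∈ C` forces `P₀ P₁ ∈ C`. The first holds because the nonzero
elements of `N` have rank one, so the only idempotents below them are `0` and themselves; the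
second because no two distinct nonzero elements of `N` commute.
-/

theorem Commute.one_sub_one_sub {R : Type*} [Ring R] {a b : R} (h : Commute a b) :
    Commute (1 - a) (1 - b) :=
  (Commute.one_right _).sub_right ((Commute.one_left b).sub_left h)

section RankOne

variable {n : Type*} [Fintype n]

theorem vecMulVec_mul_mul_vecMulVec {R : Type*} [CommSemiring R] (u w : n → R) (X : Matrix n n R) :
    vecMulVec u w * X * vecMulVec u w = ((w ᵥ* X) ⬝ᵥ u) • vecMulVec u w := by
  rw [vecMulVec_mul, vecMulVec_mul_vecMulVec, vecMulVec_smul]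

theorem eq_zero_or_eq_vecMulVec_of_isIdempotentElem {K : Type*} [Field K] {u w : n → K}
    (huw : w ⬝ᵥ u = 1) {N : Matrix n n K} (hN : IsIdempotentElem N) (hleft : vecMulVec u w * N = N)
    (hright : N * vecMulVec u w = N) : N = 0 ∨ N = vecMulVec u w := by
  set Q := vecMulVec u w
  set c := (w ᵥ* N) ⬝ᵥ u
  have hQ : Q * Q = Q := by rw [vecMulVec_mul_vecMulVec, huw, one_smul]
  have hNc : N = c • Q := by rw [← vecMulVec_mul_mul_vecMulVec, hleft, hright]
  have hc : (c * c - c) • Q = 0 := by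
    rw [sub_smul, sub_eq_zero]
    calc (c * c) • Q = (c • Q) * (c • Q) := by rw [smul_mul_smul, hQ]
      _ = c • Q := by rw [← hNc, hN.eq]
  rcases smul_eq_zero.mp hc with hc | hQ0
  · rcases mul_eq_zero.mp (show c * (c - 1) = 0 by linear_combination hc) with h | h
    · left; rw [hNc, h, zero_smul]
    · right; rw [hNc, sub_eq_zero.mp h, one_smul]
  · left; rw [hNc, hQ0, smul_zero]

end RankOne

section QIVPM

variable {d : ℕ}

def IsSupermodularOnProjectors (L : Matrix (Fin d) (Fin d) ℂ → ℝ) : Prop :=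
  ∀ P₀ P₁, IsProjector P₀ → IsProjector P₁ → P₀ * P₁ = P₁ * P₀ →
    L P₀ + L P₁ ≤ L (P₀ + P₁ - P₀ * P₁) + L (P₀ * P₁)

theorem isProjector_zero : IsProjector (0 : Matrix (Fin d) (Fin d) ℂ) :=
  isStarProjection_iff'.mp (IsStarProjection.zero _)

theorem IsProjector.one_sub {P : Matrix (Fin d) (Fin d) ℂ} (hP : IsProjector P) :
    IsProjector (1 - P) :=
  isStarProjection_iff'.mp (isStarProjection_iff'.mpr hP).one_sub

theorem isQIVPM_of_isSupermodularOnProjectors {L : Matrix (Fin d) (Fin d) ℂ → ℝ}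
    (hnonneg : ∀ P, IsProjector P → 0 ≤ L P) (hcompl : ∀ P, IsProjector P → L P + L (1 - P) ≤ 1)
    (hone : L 1 = 1) (hL : IsSupermodularOnProjectors L) :
    IsQIVPM L (fun P => 1 - L (1 - P)) := by
  have hzero : L 0 = 0 := by
    have := hcompl 0 isProjector_zero
    rw [sub_zero, hone] at this
    linarith [hnonneg 0 isProjector_zero]
  refine ⟨fun P hP => ⟨hnonneg P hP, ?_, ?_⟩, ⟨hzero, ?_⟩, ⟨hone, ?_⟩, fun P _ => ⟨?_, ?_⟩,
    fun P₀ P₁ h₀ h₁ hc => ⟨hL P₀ P₁ h₀ h₁ hc, ?_⟩⟩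
  · linarith [hcompl P hP]
  · linarith [hnonneg _ hP.one_sub]
  · simp [hone]
  · simp [hzero]
  · ring
  · simp
  · have hdual := hL (1 - P₀) (1 - P₁) h₀.one_sub h₁.one_sub (Commute.one_sub_one_sub hc)
    have hsup : 1 - P₀ + (1 - P₁) - (1 - P₀) * (1 - P₁) = 1 - P₀ * P₁ := by noncomm_ring
    have hinf : (1 - P₀) * (1 - P₁) = 1 - (P₀ + P₁ - P₀ * P₁) := by noncomm_ring
    rw [hsup, hinf] at hdual
    linarith

theorem isSupermodularOnProjectors_indicator_one {S : Set (Matrix (Fin d) (Fin d) ℂ)}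
    (hsup : ∀ P₀ P₁, IsProjector P₀ → IsProjector P₁ → P₀ * P₁ = P₁ * P₀ → P₀ ∈ S →
      P₀ + P₁ - P₀ * P₁ ∈ S)
    (hinf : ∀ P₀ P₁, IsProjector P₀ → IsProjector P₁ → P₀ * P₁ = P₁ * P₀ → P₀ ∈ S → P₁ ∈ S →
      P₀ * P₁ ∈ S) :
    IsSupermodularOnProjectors (S.indicator 1) := by
  intro P₀ P₁ h₀ h₁ hc
  have hsup₀ := hsup P₀ P₁ h₀ h₁ hc
  have hsup₁ : P₁ ∈ S → P₀ + P₁ - P₀ * P₁ ∈ S := by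
    rw [show P₀ + P₁ - P₀ * P₁ = P₁ + P₀ - P₁ * P₀ by rw [hc]; abel]
    exact hsup P₁ P₀ h₁ h₀ hc.symm
  have hinf₀₁ := hinf P₀ P₁ h₀ h₁ hc
  classical
  simp only [Set.indicator_apply, Pi.one_apply]
  split_ifs <;> simp_all
end QIVPM

def nullSet : Set (Matrix (Fin 3) (Fin 3) ℂ) := {0, Q0, Qplus, Qplus'}

def conullSet : Set (Matrix (Fin 3) (Fin 3) ℂ) := {P | 1 - P ∈ nullSet}

theorem eq_zero_or_eq_vecMulVec_of_mem_nullSet {Q : Matrix (Fin 3) (Fin 3) ℂ}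
    (hQ : Q ∈ nullSet) : Q = 0 ∨ ∃ u w : Fin 3 → ℂ, w ⬝ᵥ u = 1 ∧ Q = vecMulVec u w := by
  rcases hQ with rfl | rfl | rfl | rfl
  · exact Or.inl rfl
  · refine Or.inr ⟨![1, 0, 0], ![1, 0, 0], by simp [dotProduct, Fin.sum_univ_three], ?_⟩
    ext i j; fin_cases i <;> fin_cases j <;> simp [Q0, vecMulVec]
  · refine Or.inr ⟨![1, 1, 0], ![1/2, 1/2, 0],
      by norm_num [dotProduct, Fin.sum_univ_three, cons_val_two], ?_⟩
    ext i j; fin_cases i <;> fin_cases j <;> simp [Qplus, vecMulVec]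
  · refine Or.inr ⟨![1, 0, 1], ![1/2, 0, 1/2],
      by norm_num [dotProduct, Fin.sum_univ_three, cons_val_two], ?_⟩
    ext i j; fin_cases i <;> fin_cases j <;> simp [Qplus', vecMulVec]

theorem isIdempotentElem_of_mem_nullSet {Q : Matrix (Fin 3) (Fin 3) ℂ} (hQ : Q ∈ nullSet) :
    IsIdempotentElem Q := by
  rcases eq_zero_or_eq_vecMulVec_of_mem_nullSet hQ with rfl | ⟨u, w, huw, rfl⟩
  · exact IsIdempotentElem.zero
  · rw [IsIdempotentElem, vecMulVec_mul_vecMulVec, huw, one_smul]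

theorem trace_eq_zero_or_one_of_mem_nullSet {Q : Matrix (Fin 3) (Fin 3) ℂ} (hQ : Q ∈ nullSet) :
    Q.trace = 0 ∨ Q.trace = 1 := by
  rcases eq_zero_or_eq_vecMulVec_of_mem_nullSet hQ with rfl | ⟨u, w, huw, rfl⟩
  · exact Or.inl (trace_zero _ _)
  · rw [trace_vecMulVec, dotProduct_comm, huw]; exact Or.inr rfl

theorem notMem_conullSet_of_mem_nullSet {P : Matrix (Fin 3) (Fin 3) ℂ} (hP : P ∈ nullSet) :
    P ∉ conullSet := by
  intro hP'
  have htrace : (1 - P).trace = 3 - P.trace := by simp [trace_sub]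
  rcases trace_eq_zero_or_one_of_mem_nullSet hP with h | h <;>
  rcases trace_eq_zero_or_one_of_mem_nullSet hP' with h' | h' <;>
  rw [htrace, h] at h' <;> norm_num at h'

theorem mul_mem_nullSet {Q P : Matrix (Fin 3) (Fin 3) ℂ} (hQ : Q ∈ nullSet)
    (hP : IsIdempotentElem P) (hc : Commute Q P) : Q * P ∈ nullSet := by
  have hQQ := isIdempotentElem_of_mem_nullSet hQ
  rcases eq_zero_or_eq_vecMulVec_of_mem_nullSet hQ with rfl | ⟨u, w, huw, rfl⟩
  · rw [zero_mul]; exact Or.inl rfl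
  · rcases eq_zero_or_eq_vecMulVec_of_isIdempotentElem huw (hQQ.mul_of_commute hc hP)
      (by rw [← mul_assoc, hQQ.eq]) (by rw [mul_assoc, ← hc.eq, ← mul_assoc, hQQ.eq]) with h | h
    · rw [h]; exact Or.inl rfl
    · rwa [h]

theorem eq_zero_or_eq_zero_or_eq_of_commute {Q Q' : Matrix (Fin 3) (Fin 3) ℂ}
    (hQ : Q ∈ nullSet) (hQ' : Q' ∈ nullSet) (hc : Commute Q Q') : Q = 0 ∨ Q' = 0 ∨ Q = Q' := by
  rcases hQ with rfl | rfl | rfl | rfl <;> rcases hQ' with rfl | rfl | rfl | rfl <;> try simp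
  all_goals
    revert hc
    norm_num [commute_iff_eq, Q0, Qplus, Qplus', mul_fin_three]

theorem sup_mem_conullSet {P₀ P₁ : Matrix (Fin 3) (Fin 3) ℂ} (h₀ : P₀ ∈ conullSet)
    (h₁ : IsIdempotentElem P₁) (hc : Commute P₀ P₁) : P₀ + P₁ - P₀ * P₁ ∈ conullSet := by
  show 1 - (P₀ + P₁ - P₀ * P₁) ∈ nullSet
  rw [show 1 - (P₀ + P₁ - P₀ * P₁) = (1 - P₀) * (1 - P₁) by noncomm_ring]
  exact mul_mem_nullSet h₀ h₁.one_sub hc.one_sub_one_sub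

theorem mul_mem_conullSet {P₀ P₁ : Matrix (Fin 3) (Fin 3) ℂ} (h₀ : P₀ ∈ conullSet)
    (h₁ : P₁ ∈ conullSet) (hc : Commute P₀ P₁) : P₀ * P₁ ∈ conullSet := by
  show 1 - P₀ * P₁ ∈ nullSet
  rw [show 1 - P₀ * P₁ = (1 - P₀) + (1 - P₁) - (1 - P₀) * (1 - P₁) by noncomm_ring]
  rcases eq_zero_or_eq_zero_or_eq_of_commute h₀ h₁ hc.one_sub_one_sub with h | h | h
  · rwa [h, zero_add, zero_mul, sub_zero]
  · rwa [h, add_zero, mul_zero, sub_zero]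
  · rwa [h, (isIdempotentElem_of_mem_nullSet h₁).eq, add_sub_cancel_right]

theorem mem_conullSet_iff {P : Matrix (Fin 3) (Fin 3) ℂ} :
    P ∈ conullSet ↔ P = 1 ∨ P = 1 - Q0 ∨ P = 1 - Qplus ∨ P = 1 - Qplus' := by
  simp only [nullSet, conullSet, Set.mem_ofPred_eq, Set.mem_insert_iff, Set.mem_singleton_iff,
    sub_eq_iff_comm (b := P), sub_zero, eq_comm (b := P)]

theorem one_sub_mem_conullSet_iff {P : Matrix (Fin 3) (Fin 3) ℂ} :
    1 - P ∈ conullSet ↔ P ∈ nullSet := by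
  rw [conullSet, Set.mem_ofPred_eq, sub_sub_cancel]

theorem L8_eq_indicator : L8 = conullSet.indicator 1 := by
  funext P
  rw [L8]
  split_ifs with hnull hconull
  · rw [Set.indicator_of_notMem (notMem_conullSet_of_mem_nullSet hnull)]
  · rw [Set.indicator_of_mem (mem_conullSet_iff.mpr hconull), Pi.one_apply]
  · rw [Set.indicator_of_notMem (mt mem_conullSet_iff.mp hconull)]

theorem R8_eq_one_sub_L8_one_sub : R8 = fun P => 1 - L8 (1 - P) := by
  funext P
  simp only [R8, ite_self, L8_eq_indicator]
  split_ifs with hnull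
  · rw [Set.indicator_of_mem (one_sub_mem_conullSet_iff.mpr hnull), Pi.one_apply, sub_self]
  · rw [Set.indicator_of_notMem (mt one_sub_mem_conullSet_iff.mp hnull), sub_zero]

/-- The three-valued assignment `(L8, R8)` is a QIVPM on `ℂ³`. -/
theorem L8_R8_is_QIVPM : IsQIVPM L8 R8 := by
  rw [R8_eq_one_sub_L8_one_sub, L8_eq_indicator]
  have hnonneg : ∀ P, (0 : ℝ) ≤ conullSet.indicator 1 P :=
    Set.indicator_nonneg fun _ _ => zero_le_one
  have hcompl (P : Matrix (Fin 3) (Fin 3) ℂ) :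
      conullSet.indicator 1 P + conullSet.indicator 1 (1 - P) ≤ (1 : ℝ) := by
    by_cases hP : P ∈ conullSet
    · simp [hP, notMem_conullSet_of_mem_nullSet hP]
    · rw [Set.indicator_of_notMem hP, zero_add]
      exact Set.indicator_le_self' (fun _ _ => zero_le_one) _
  have hsuper : IsSupermodularOnProjectors (conullSet.indicator 1) :=
    isSupermodularOnProjectors_indicator_one
      (fun _ _ _ h₁ hc h₀ => sup_mem_conullSet h₀ h₁.1 hc)
      (fun _ _ _ _ hc h₀ h₁ => mul_mem_conullSet h₀ h₁ hc)
  exact isQIVPM_of_isSupermodularOnProjectors (fun P _ => hnonneg P) (fun P _ => hcompl P)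
    (Set.indicator_of_mem (mem_conullSet_iff.mpr (Or.inl rfl)) _) hsuper
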